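/- arXiv:1103.3267 — 7 statements merged into one kernel-verified Lean document; each statement's English description precedes it below -/
import Mathlib

section
/- Let u : ℝ × ℝ → ℝ be twice continuously differentiable and let g¹, g² : ℝ × ℝ → ℝ be continuously differentiable with g¹_x + g¹_t = 0 and g²_x − g²_t = 0 at every point. Then at every point (x,t): ∂_x[(g¹+g²)u_x − (g¹−g²)u_t] + ∂_t[(g¹−g²)u_x − (g¹+g²)u_t] = (g¹+g²)(u_xx − u_tt). -/
/-!
Expanding both divergences by the product rule, the terms in which `u` is differentiated
twice give `(g¹+g²)(u_xx − u_tt)` plus a multiple of `u_xt − u_tx`, which vanishes by symmetry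
of the second derivative. The terms in which `g¹, g²` are differentiated combine to
`(u_x − u_t)(g¹_x + g¹_t) + (u_x + u_t)(g²_x − g²_t) = 0`.
-/

/-- Partial derivative with respect to the first (space) variable `x`. -/
noncomputable def px (u : ℝ × ℝ → ℝ) (p : ℝ × ℝ) : ℝ := fderiv ℝ u p (1, 0)

/-- Partial derivative with respect to the second (time) variable `t`. -/
noncomputable def pt (u : ℝ × ℝ → ℝ) (p : ℝ × ℝ) : ℝ := fderiv ℝ u p (0, 1)

section DirectionalDerivatives

variable {E F : Type*} [NormedAddCommGroup E] [NormedSpace ℝ E]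
  [NormedAddCommGroup F] [NormedSpace ℝ F]

lemma fderiv_mul_sub_mul_apply {f g a b : E → ℝ} {p : E}
    (hf : DifferentiableAt ℝ f p) (hg : DifferentiableAt ℝ g p)
    (ha : DifferentiableAt ℝ a p) (hb : DifferentiableAt ℝ b p) (v : E) :
    fderiv ℝ (fun q => f q * a q - g q * b q) p v
      = fderiv ℝ f p v * a p + f p * fderiv ℝ a p v
        - (fderiv ℝ g p v * b p + g p * fderiv ℝ b p v) := by
  rw [fderiv_fun_sub (hf.fun_mul ha) (hg.fun_mul hb), fderiv_fun_mul hf ha, fderiv_fun_mul hg hb]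
  simp only [sub_apply, add_apply, smul_apply, smul_eq_mul]
  ring

lemma ContDiff.differentiable_fderiv_apply {u : E → F} (hu : ContDiff ℝ 2 u) (w : E) :
    Differentiable ℝ (fun q => fderiv ℝ u q w) :=
  ((hu.fderiv_right le_rfl).clm_apply contDiff_const).differentiable one_ne_zero

lemma fderiv_fderiv_apply_eq {u : E → F} (hu : ContDiff ℝ 2 u) (p v w : E) :
    fderiv ℝ (fun q => fderiv ℝ u q w) p v = fderiv ℝ (fderiv ℝ u) p v w := by
  have hdu : DifferentiableAt ℝ (fderiv ℝ u) p :=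
    (hu.fderiv_right le_rfl).differentiable one_ne_zero p
  rw [fderiv_clm_apply hdu (differentiableAt_const w)]
  simp

lemma fderiv_fderiv_apply_comm {u : E → F} (hu : ContDiff ℝ 2 u) (p v w : E) :
    fderiv ℝ (fun q => fderiv ℝ u q w) p v = fderiv ℝ (fun q => fderiv ℝ u q v) p w := by
  rw [fderiv_fderiv_apply_eq hu, fderiv_fderiv_apply_eq hu,
    hu.contDiffAt.isSymmSndFDerivAt (by simp)]

end DirectionalDerivatives

/-- For `u` twice continuously differentiable and `g¹, g²` continuously differentiable with
`g¹_x + g¹_t = 0`, `g²_x − g²_t = 0`, the divergence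
`D_x[(g¹+g²)u_x − (g¹−g²)u_t] + D_t[(g¹−g²)u_x − (g¹+g²)u_t]` equals
`(g¹+g²)(u_xx − u_tt)` at every point. -/
theorem stmt_2 (u : ℝ × ℝ → ℝ) (hu : ContDiff ℝ 2 u)
    (g1 g2 : ℝ × ℝ → ℝ) (hg1 : ContDiff ℝ 1 g1) (hg2 : ContDiff ℝ 1 g2)
    (hc1 : ∀ p, px g1 p + pt g1 p = 0) (hc2 : ∀ p, px g2 p - pt g2 p = 0)
    (p : ℝ × ℝ) :
    px (fun q => (g1 q + g2 q) * px u q - (g1 q - g2 q) * pt u q) p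
      + pt (fun q => (g1 q - g2 q) * px u q - (g1 q + g2 q) * pt u q) p
      = (g1 p + g2 p) * (px (px u) p - pt (pt u) p) := by
  have hux := hu.differentiable_fderiv_apply (1, 0) p
  have hut := hu.differentiable_fderiv_apply (0, 1) p
  have hg1p := hg1.differentiable one_ne_zero p
  have hg2p := hg2.differentiable one_ne_zero p
  have hsym : px (pt u) p = pt (px u) p := fderiv_fderiv_apply_comm hu p _ _
  have h1 := hc1 p
  have h2 := hc2 p
  unfold px pt at h1 h2 hsym ⊢
  rw [fderiv_mul_sub_mul_apply (hg1p.fun_add hg2p) (hg1p.fun_sub hg2p) hux hut,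
    fderiv_mul_sub_mul_apply (hg1p.fun_sub hg2p) (hg1p.fun_add hg2p) hux hut,
    fderiv_fun_add hg1p hg2p, fderiv_fun_sub hg1p hg2p]
  simp only [add_apply, sub_apply]
  linear_combination (fderiv ℝ u p (1, 0) - fderiv ℝ u p (0, 1)) * h1
    + (fderiv ℝ u p (1, 0) + fderiv ℝ u p (0, 1)) * h2 - (g1 p - g2 p) * hsym
end

section
/- Conservation of potential vorticity: let x, y : ℝ³ → ℝ be smooth functions of (a¹, a², t) with J = x_{,1}y_{,2} − x_{,2}y_{,1} nowhere zero, h = 1/J, f, g ∈ ℝ, and suppose the shallow water equations hold at every point: −ẍ + fẏ − g·∂h/∂x = 0 and −ÿ − fẋ − g·∂h/∂y = 0. Then at every point, ∂/∂t [ (1/h)·( ∂ẏ/∂x − ∂ẋ/∂y + f ) ] = 0. -/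
noncomputable section

/-- Partial derivative with respect to the label `a¹`. -/
def d1 (F : ℝ × ℝ × ℝ → ℝ) (p : ℝ × ℝ × ℝ) : ℝ := fderiv ℝ F p (1, 0, 0)

/-- Partial derivative with respect to the label `a²`. -/
def d2 (F : ℝ × ℝ × ℝ → ℝ) (p : ℝ × ℝ × ℝ) : ℝ := fderiv ℝ F p (0, 1, 0)

/-- Partial derivative with respect to time `t` (overdot). -/
def dt (F : ℝ × ℝ × ℝ → ℝ) (p : ℝ × ℝ × ℝ) : ℝ := fderiv ℝ F p (0, 0, 1)

/-- The Jacobian `J = x_{,1}y_{,2} − x_{,2}y_{,1}`. -/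
def Jac (x y : ℝ × ℝ × ℝ → ℝ) (p : ℝ × ℝ × ℝ) : ℝ :=
  d1 x p * d2 y p - d2 x p * d1 y p

/-- The fluid depth `h = 1/J`. -/
def dep (x y : ℝ × ℝ × ℝ → ℝ) : ℝ × ℝ × ℝ → ℝ := fun p => 1 / Jac x y p

/-- The Eulerian derivative `∂F/∂x = h(y_{,2}F_{,1} − y_{,1}F_{,2})`. -/
def Dex (x y F : ℝ × ℝ × ℝ → ℝ) (p : ℝ × ℝ × ℝ) : ℝ :=
  dep x y p * (d2 y p * d1 F p - d1 y p * d2 F p)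

/-- The Eulerian derivative `∂F/∂y = h(−x_{,2}F_{,1} + x_{,1}F_{,2})`. -/
def Dey (x y F : ℝ × ℝ × ℝ → ℝ) (p : ℝ × ℝ × ℝ) : ℝ :=
  dep x y p * (-(d2 x p) * d1 F p + d1 x p * d2 F p)

/-!
In the labels `(a¹, a²)` the potential vorticity is a sum of Jacobian brackets
`∂(F, G)/∂(a¹, a²) = F_{,1} G_{,2} − F_{,2} G_{,1}`:
`(1/h)(∂ẏ/∂x − ∂ẋ/∂y + f) = ∂(ẋ, x) + ∂(ẏ, y) + f ∂(x, y)`.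
The time derivative commutes with the label derivatives, so by the Leibniz rule for the bracket
its rate of change is `∂(ẍ, x) + ∂(ÿ, y) + f (∂(ẋ, y) + ∂(x, ẏ))`.
Substituting the momentum equations, the Coriolis terms cancel by antisymmetry of the bracket,
and the pressure terms add up to `−g J (∂²h/∂x∂y − ∂²h/∂y∂x)`,
which vanishes because the Eulerian derivatives commute.
-/

open scoped ContDiff

section DirDeriv

variable {E : Type*} [NormedAddCommGroup E] [NormedSpace ℝ E]

def dirDeriv (v : E) (F : E → ℝ) (p : E) : ℝ := fderiv ℝ F p v

@[fun_prop]
theorem contDiff_dirDeriv {F : E → ℝ} (v : E) (hF : ContDiff ℝ ∞ F) :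
    ContDiff ℝ ∞ (fun q => dirDeriv v F q) :=
  (hF.fderiv_right (m := ∞) (by simp)).clm_apply contDiff_const

@[fun_prop]
theorem ContDiff.differentiableAt_of_top {F : E → ℝ} (hF : ContDiff ℝ ∞ F) (p : E) :
    DifferentiableAt ℝ F p :=
  hF.contDiffAt.differentiableAt (by simp)

theorem dirDeriv_comm {F : E → ℝ} (hF : ContDiff ℝ 2 F) (v w p : E) :
    dirDeriv v (dirDeriv w F) p = dirDeriv w (dirDeriv v F) p := by
  have hdiff : Differentiable ℝ (fderiv ℝ F) :=
    (hF.fderiv_right (m := 1) (by norm_num)).differentiable one_ne_zero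
  have apply_fderiv (u z : E) :
      fderiv ℝ (fun q => fderiv ℝ F q u) p z = fderiv ℝ (fderiv ℝ F) p z u := by
    rw [fderiv_clm_apply hdiff.differentiableAt (differentiableAt_const u)]
    simp
  change fderiv ℝ (fun q => fderiv ℝ F q w) p v = fderiv ℝ (fun q => fderiv ℝ F q v) p w
  rw [apply_fderiv, apply_fderiv]
  exact hF.contDiffAt.isSymmSndFDerivAt (by simp) v w

variable {F G : E → ℝ} {v p : E}

theorem dirDeriv_add (hF : DifferentiableAt ℝ F p) (hG : DifferentiableAt ℝ G p) :
    dirDeriv v (fun q => F q + G q) p = dirDeriv v F p + dirDeriv v G p := by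
  simp [dirDeriv, fderiv_fun_add hF hG]

theorem dirDeriv_sub (hF : DifferentiableAt ℝ F p) (hG : DifferentiableAt ℝ G p) :
    dirDeriv v (fun q => F q - G q) p = dirDeriv v F p - dirDeriv v G p := by
  simp [dirDeriv, fderiv_fun_sub hF hG]

theorem dirDeriv_mul (hF : DifferentiableAt ℝ F p) (hG : DifferentiableAt ℝ G p) :
    dirDeriv v (fun q => F q * G q) p = dirDeriv v F p * G p + F p * dirDeriv v G p := by
  simp [dirDeriv, fderiv_fun_mul hF hG]; ring

theorem dirDeriv_neg : dirDeriv v (fun q => -F q) p = -dirDeriv v F p := by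
  simp [dirDeriv, fderiv_fun_neg]

theorem dirDeriv_const_mul (c : ℝ) (hF : DifferentiableAt ℝ F p) :
    dirDeriv v (fun q => c * F q) p = c * dirDeriv v F p := by
  simp [dirDeriv, fderiv_const_mul hF]

theorem dirDeriv_inv (hF : DifferentiableAt ℝ F p) (hp : F p ≠ 0) :
    dirDeriv v (fun q => (F q)⁻¹) p = -dirDeriv v F p / F p ^ 2 := by
  have hcomp : (fun q => (F q)⁻¹) = (fun t : ℝ => t⁻¹) ∘ F := rfl
  simp [dirDeriv, hcomp, fderiv_comp p (differentiableAt_inv hp) hF, fderiv_inv]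
  ring

end DirDeriv

section Lagrangian

abbrev e₁ : ℝ × ℝ × ℝ := (1, 0, 0)
abbrev e₂ : ℝ × ℝ × ℝ := (0, 1, 0)
abbrev e₃ : ℝ × ℝ × ℝ := (0, 0, 1)

theorem d1_eq_dirDeriv : d1 = dirDeriv e₁ := rfl
theorem d2_eq_dirDeriv : d2 = dirDeriv e₂ := rfl
theorem dt_eq_dirDeriv : dt = dirDeriv e₃ := rfl

variable {x y F G H : ℝ × ℝ × ℝ → ℝ} {p : ℝ × ℝ × ℝ}

theorem Jac_swap (F G : ℝ × ℝ × ℝ → ℝ) (p : ℝ × ℝ × ℝ) : Jac G F p = -Jac F G p := by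
  unfold Jac; ring

theorem Jac_self (F : ℝ × ℝ × ℝ → ℝ) (p : ℝ × ℝ × ℝ) : Jac F F p = 0 := by
  unfold Jac; ring

theorem Jac_mul_dep (hJ : Jac x y p ≠ 0) : Jac x y p * dep x y p = 1 :=
  mul_one_div_cancel hJ

theorem Dex_eq_dep_mul_Jac (p : ℝ × ℝ × ℝ) : Dex x y F p = dep x y p * Jac F y p := by
  unfold Dex Jac; ring

theorem Dey_eq_dep_mul_Jac (p : ℝ × ℝ × ℝ) : Dey x y F p = dep x y p * Jac x F p := by
  unfold Dey Jac; ring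

@[fun_prop]
theorem contDiff_Jac (hF : ContDiff ℝ ∞ F) (hG : ContDiff ℝ ∞ G) : ContDiff ℝ ∞ (Jac F G) := by
  unfold Jac; rw [d1_eq_dirDeriv, d2_eq_dirDeriv]; fun_prop

theorem contDiff_dep (hx : ContDiff ℝ ∞ x) (hy : ContDiff ℝ ∞ y) (hJ : ∀ q, Jac x y q ≠ 0) :
    ContDiff ℝ ∞ (dep x y) := by
  unfold dep; simp only [one_div]; exact (contDiff_Jac hx hy).inv hJ

theorem contDiff_Dex (hx : ContDiff ℝ ∞ x) (hy : ContDiff ℝ ∞ y) (hJ : ∀ q, Jac x y q ≠ 0)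
    (hF : ContDiff ℝ ∞ F) : ContDiff ℝ ∞ (Dex x y F) := by
  have hdep := contDiff_dep hx hy hJ
  unfold Dex; rw [d1_eq_dirDeriv, d2_eq_dirDeriv]; fun_prop

theorem contDiff_Dey (hx : ContDiff ℝ ∞ x) (hy : ContDiff ℝ ∞ y) (hJ : ∀ q, Jac x y q ≠ 0)
    (hF : ContDiff ℝ ∞ F) : ContDiff ℝ ∞ (Dey x y F) := by
  have hdep := contDiff_dep hx hy hJ
  unfold Dey; rw [d1_eq_dirDeriv, d2_eq_dirDeriv]; fun_prop

theorem Jac_const_mul_sub_const_mul (a b : ℝ) (hF : DifferentiableAt ℝ F p)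
    (hG : DifferentiableAt ℝ G p) :
    Jac (fun q => a * F q - b * G q) H p = a * Jac F H p - b * Jac G H p := by
  unfold Jac
  simp only [d1_eq_dirDeriv, d2_eq_dirDeriv]
  simp (disch := fun_prop) only [dirDeriv_sub, dirDeriv_const_mul]
  ring

theorem dt_Jac (hF : ContDiff ℝ ∞ F) (hG : ContDiff ℝ ∞ G) (p : ℝ × ℝ × ℝ) :
    dt (Jac F G) p = Jac (dt F) G p + Jac F (dt G) p := by
  unfold Jac
  simp only [d1_eq_dirDeriv, d2_eq_dirDeriv, dt_eq_dirDeriv]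
  simp (disch := fun_prop) only [dirDeriv_sub, dirDeriv_mul]
  rw [dirDeriv_comm (hF.of_le (by norm_cast)) e₃ e₁, dirDeriv_comm (hF.of_le (by norm_cast)) e₃ e₂,
    dirDeriv_comm (hG.of_le (by norm_cast)) e₃ e₁, dirDeriv_comm (hG.of_le (by norm_cast)) e₃ e₂]
  ring

theorem Dex_Dey_comm (hx : ContDiff ℝ ∞ x) (hy : ContDiff ℝ ∞ y) (hJ : ∀ q, Jac x y q ≠ 0)
    (hF : ContDiff ℝ ∞ F) (p : ℝ × ℝ × ℝ) :
    Dex x y (Dey x y F) p = Dey x y (Dex x y F) p := by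
  unfold Dex Dey dep
  unfold Jac at hJ ⊢
  simp only [d1_eq_dirDeriv, d2_eq_dirDeriv, one_div] at hJ ⊢
  simp (disch := first | exact hJ _ | fun_prop (disch := exact hJ _)) only
    [dirDeriv_mul, dirDeriv_add, dirDeriv_sub, dirDeriv_inv, dirDeriv_neg]
  rw [dirDeriv_comm (hx.of_le (by norm_cast)) e₂ e₁, dirDeriv_comm (hy.of_le (by norm_cast)) e₂ e₁,
    dirDeriv_comm (hF.of_le (by norm_cast)) e₂ e₁]
  have := hJ p
  field_simp
  ring

theorem Jac_Dex_add_Jac_Dey (hx : ContDiff ℝ ∞ x) (hy : ContDiff ℝ ∞ y)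
    (hJ : ∀ q, Jac x y q ≠ 0) (hF : ContDiff ℝ ∞ F) (p : ℝ × ℝ × ℝ) :
    Jac (Dex x y F) x p + Jac (Dey x y F) y p = 0 := by
  have hcomm := Dex_Dey_comm hx hy hJ hF p
  rw [Dex_eq_dep_mul_Jac, Dey_eq_dep_mul_Jac] at hcomm
  have hJp := Jac_mul_dep (hJ p)
  linear_combination Jac x y p * hcomm - (Jac (Dey x y F) y p - Jac x (Dex x y F) p) * hJp
    + Jac_swap (Dex x y F) x p

def potentialVorticity (x y : ℝ × ℝ × ℝ → ℝ) (f : ℝ) (p : ℝ × ℝ × ℝ) : ℝ :=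
  (1 / dep x y p) * (Dex x y (dt y) p - Dey x y (dt x) p + f)

theorem potentialVorticity_eq_Jac (f : ℝ) (hJ : Jac x y p ≠ 0) :
    potentialVorticity x y f p = Jac (dt x) x p + Jac (dt y) y p + f * Jac x y p := by
  unfold potentialVorticity
  rw [Dex_eq_dep_mul_Jac, Dey_eq_dep_mul_Jac, Jac_swap x (dt x)]
  unfold dep
  field_simp
  ring

theorem dt_potentialVorticity (hx : ContDiff ℝ ∞ x) (hy : ContDiff ℝ ∞ y)
    (hJ : ∀ q, Jac x y q ≠ 0) (f : ℝ) (p : ℝ × ℝ × ℝ) :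
    dt (potentialVorticity x y f) p
      = Jac (dt (dt x)) x p + Jac (dt (dt y)) y p + f * (Jac (dt x) y p + Jac x (dt y) p) := by
  have hxt : ContDiff ℝ ∞ (dt x) := contDiff_dirDeriv e₃ hx
  have hyt : ContDiff ℝ ∞ (dt y) := contDiff_dirDeriv e₃ hy
  have hpv : potentialVorticity x y f = fun q => Jac (dt x) x q + Jac (dt y) y q + f * Jac x y q :=
    funext fun q => potentialVorticity_eq_Jac f (hJ q)
  rw [hpv, dt_eq_dirDeriv]
  simp (disch := fun_prop) only [dirDeriv_add, dirDeriv_const_mul, ← dt_eq_dirDeriv]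
  rw [dt_Jac hxt hx, dt_Jac hyt hy, dt_Jac hx hy, Jac_self, Jac_self]
  ring

end Lagrangian

open scoped ContDiff in
/-- Conservation of potential vorticity: on solutions of the shallow water equations,
`∂/∂t [(1/h)(∂ẏ/∂x − ∂ẋ/∂y + f)] = 0`. -/
theorem stmt_11 (x y : ℝ × ℝ × ℝ → ℝ) (hx : ContDiff ℝ ∞ x) (hy : ContDiff ℝ ∞ y)
    (f g : ℝ) (hJ : ∀ p, Jac x y p ≠ 0)
    (hEx : ∀ p, -(dt (fun q => dt x q) p) + f * dt y p - g * Dex x y (dep x y) p = 0)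
    (hEy : ∀ p, -(dt (fun q => dt y q) p) - f * dt x p - g * Dey x y (dep x y) p = 0)
    (p : ℝ × ℝ × ℝ) :
    dt (fun q => (1 / dep x y q)
      * (Dex x y (fun r => dt y r) q - Dey x y (fun r => dt x r) q + f)) p = 0 := by
  have hxt : ContDiff ℝ ∞ (dt x) := contDiff_dirDeriv e₃ hx
  have hyt : ContDiff ℝ ∞ (dt y) := contDiff_dirDeriv e₃ hy
  have hdep := contDiff_dep hx hy hJ
  have hxtt : dt (dt x) = fun q => f * dt y q - g * Dex x y (dep x y) q :=
    funext fun q => by linear_combination -hEx q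
  have hytt : dt (dt y) = fun q => (-f) * dt x q - g * Dey x y (dep x y) q :=
    funext fun q => by linear_combination -hEy q
  change dt (potentialVorticity x y f) p = 0
  rw [dt_potentialVorticity hx hy hJ, hxtt, hytt,
    Jac_const_mul_sub_const_mul f g (hyt.differentiableAt_of_top p)
      ((contDiff_Dex hx hy hJ hdep).differentiableAt_of_top p),
    Jac_const_mul_sub_const_mul (-f) g (hxt.differentiableAt_of_top p)
      ((contDiff_Dey hx hy hJ hdep).differentiableAt_of_top p)]
  linear_combination f * Jac_swap x (dt y) p - g * Jac_Dex_add_Jac_Dey hx hy hJ hdep p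

end
end

section
/- First variation of the lattice KdV action: let c ∈ ℝ, let u : ℤ² → ℝ satisfy u(n+e₁) − u(n+e₂) > 0 for all n ∈ ℤ², and let v : ℤ² → ℝ have finite support. For w : ℤ² → ℝ with w(n+e₁) − w(n+e₂) > 0 everywhere, set L[w](n) = w(n)·(w(n+e₁) − w(n+e₂)) + c·log(w(n+e₁) − w(n+e₂)). Then there exists ε₀ > 0 such that for |ε| < ε₀ the function n ↦ L[u+εv](n) − L[u](n) has finite support, and the map ε ↦ ∑_{n∈ℤ²} (L[u+εv](n) − L[u](n)) is differentiable at ε = 0 with derivative ∑_{n∈ℤ²} E(n)·v(n), where E(n) = u(n+e₁) − u(n+e₂) + u(n−e₁) − u(n−e₂) − c·[ 1/(u(n+e₁−e₂) − u(n)) − 1/(u(n) − u(n−e₁+e₂)) ]. -/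
noncomputable section

/-- The lattice KdV Lagrangian `L[w](n) = w_{0,0}(w_{1,0} − w_{0,1}) + c·ln(w_{1,0} − w_{0,1})`. -/
def latL (c : ℝ) (w : ℤ × ℤ → ℝ) (n : ℤ × ℤ) : ℝ :=
  w n * (w (n + (1, 0)) - w (n + (0, 1)))
    + c * Real.log (w (n + (1, 0)) - w (n + (0, 1)))

/-- The discrete Euler–Lagrange expression
`Ẽ_u(L) = u_{1,0} − u_{0,1} + u_{−1,0} − u_{0,−1} − c(1/(u_{1,−1} − u_{0,0}) − 1/(u_{0,0} − u_{−1,1}))`. -/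
def latEL (c : ℝ) (u : ℤ × ℤ → ℝ) (n : ℤ × ℤ) : ℝ :=
  u (n + (1, 0)) - u (n + (0, 1)) + u (n - (1, 0)) - u (n - (0, 1))
    - c * (1 / (u (n + (1, -1)) - u n) - 1 / (u n - u (n + (-1, 1))))

/-- The Lagrange multiplier `ν_{0,0} = u_{0,0} − u_{1,1} + c/(u_{1,0} − u_{0,1})`. -/
def latNu (c : ℝ) (u : ℤ × ℤ → ℝ) (n : ℤ × ℤ) : ℝ :=
  u n - u (n + (1, 1)) + c / (u (n + (1, 0)) - u (n + (0, 1)))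

/-!
The difference `L[u+εv](n) − L[u](n)` vanishes unless `v` is nonzero at `n`, `n + e₁` or `n + e₂`,
so the varied action is a finite sum and may be differentiated termwise. Writing
`Δw(n) = w(n+e₁) − w(n+e₂)` and `p = u + c/Δu` for `∂L/∂u_{1,0} = −∂L/∂u_{0,1}`, the derivative of
the `n`-th term is `v(n)·Δu(n) + p(n)·Δv(n)`. Summation by parts (the shifts `n ↦ n − e₁`,
`n ↦ n − e₂`) turns `∑ p(n)·Δv(n)` into `∑ (p(n−e₁) − p(n−e₂))·v(n)`, and
`Δu(n) + p(n−e₁) − p(n−e₂)` is exactly `Ẽ_u(L)(n)`.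
-/

open Function

theorem hasDerivAt_finsum {ι 𝕜 F : Type*} [NontriviallyNormedField 𝕜] [NormedAddCommGroup F]
    [NormedSpace 𝕜 F] {f : 𝕜 → ι → F} {f' : ι → F} {x : 𝕜} {s : Set ι} (hs : s.Finite)
    (hsupp : ∀ y, support (f y) ⊆ s) (hf : ∀ i, HasDerivAt (f · i) (f' i) x) :
    HasDerivAt (fun y => ∑ᶠ i, f y i) (∑ᶠ i, f' i) x := by
  have hsupp' : support f' ⊆ s := fun i hi => by
    by_contra his
    have hzero : (f · i) = fun _ => 0 := funext fun y => notMem_support.mp fun h => his (hsupp y h)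
    exact hi ((hf i).unique (hzero ▸ hasDerivAt_const x 0))
  have hs' : s ⊆ hs.toFinset := hs.coe_toFinset.symm.subset
  simp only [finsum_eq_sum_of_support_subset _ ((hsupp _).trans hs'),
    finsum_eq_sum_of_support_subset _ (hsupp'.trans hs')]
  exact HasDerivAt.fun_sum fun i _ => hf i

theorem finsum_mul_comp_add {G R : Type*} [AddGroup G] [Mul R] [AddCommMonoid R]
    (g v : G → R) (a : G) : ∑ᶠ n, g n * v (n + a) = ∑ᶠ n, g (n - a) * v n := by
  rw [← finsum_comp_equiv (Equiv.addRight a) (f := fun n => g (n - a) * v n)]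
  simp

theorem hasFiniteSupport_mul_comp_add {G R : Type*} [AddGroup G] [MulZeroClass R]
    (g : G → R) {v : G → R} (hv : HasFiniteSupport v) (a : G) :
    HasFiniteSupport fun n => g n * v (n + a) :=
  (hv.preimage (add_left_injective a).injOn).subset fun _ hn => right_ne_zero_of_mul hn

theorem hasDerivAt_mul_add_log (a b p q c : ℝ) (hp : p ≠ 0) :
    HasDerivAt (fun ε => (a + ε * b) * (p + ε * q) + c * Real.log (p + ε * q))
      (b * p + (a + c / p) * q) 0 := by
  have hline : ∀ a b : ℝ, HasDerivAt (fun ε => a + ε * b) b 0 := fun a b => by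
    simpa using ((hasDerivAt_id (0 : ℝ)).mul_const b).const_add a
  refine (((hline a b).mul (hline p q)).add
    (((hline p q).log (by simpa using hp)).const_mul c)).congr_deriv ?_
  simp only [zero_mul, add_zero]
  ring

def latDiff (w : ℤ × ℤ → ℝ) (n : ℤ × ℤ) : ℝ := w (n + (1, 0)) - w (n + (0, 1))

/-- `∂L/∂u_{1,0} = −∂L/∂u_{0,1}`, evaluated along `u`. -/
def latMomentum (c : ℝ) (u : ℤ × ℤ → ℝ) (n : ℤ × ℤ) : ℝ := u n + c / latDiff u n

theorem latEL_eq_latDiff_add_latMomentum_sub (c : ℝ) (u : ℤ × ℤ → ℝ) (n : ℤ × ℤ) :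
    latEL c u n = latDiff u n + latMomentum c u (n - (1, 0)) - latMomentum c u (n - (0, 1)) := by
  have h₁ : n - (1, 0) + (0, 1) = n + (-1, 1) := by rw [sub_add_eq_add_sub, add_sub_assoc]; rfl
  have h₂ : n - (0, 1) + (1, 0) = n + (1, -1) := by rw [sub_add_eq_add_sub, add_sub_assoc]; rfl
  simp only [latEL, latMomentum, latDiff, sub_add_cancel, h₁, h₂]
  ring

theorem support_latL_perturb_sub_subset (c : ℝ) (u v : ℤ × ℤ → ℝ) (ε : ℝ) :
    support (fun n => latL c (fun m => u m + ε * v m) n - latL c u n) ⊆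
      support v ∪ (· + (1, 0)) ⁻¹' support v ∪ (· + (0, 1)) ⁻¹' support v := by
  intro n hn
  by_contra h
  simp only [Set.mem_union, Set.mem_preimage, mem_support, not_or, not_not] at h
  obtain ⟨⟨h₀, h₁⟩, h₂⟩ := h
  simp [latL, h₀, h₁, h₂] at hn

theorem hasDerivAt_latL_perturb (c : ℝ) (u v : ℤ × ℤ → ℝ) (n : ℤ × ℤ) (hu : latDiff u n ≠ 0) :
    HasDerivAt (fun ε => latL c (fun m => u m + ε * v m) n)
      (v n * latDiff u n + latMomentum c u n * latDiff v n) 0 := by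
  have hdiff : ∀ ε, (u (n + (1, 0)) + ε * v (n + (1, 0))) - (u (n + (0, 1)) + ε * v (n + (0, 1)))
      = latDiff u n + ε * latDiff v n := fun ε => by unfold latDiff; ring
  simp only [latL, hdiff]
  exact hasDerivAt_mul_add_log (u n) (v n) (latDiff u n) (latDiff v n) c hu

theorem finsum_variation_eq_finsum_latEL_mul (c : ℝ) (u v : ℤ × ℤ → ℝ) (hv : HasFiniteSupport v) :
    ∑ᶠ n, (v n * latDiff u n + latMomentum c u n * latDiff v n) = ∑ᶠ n, latEL c u n * v n := by
  have h₀ : HasFiniteSupport fun n => v n * latDiff u n := hv.mul_left _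
  have h₁ := hasFiniteSupport_mul_comp_add (latMomentum c u) hv (1, 0)
  have h₂ := hasFiniteSupport_mul_comp_add (latMomentum c u) hv (0, 1)
  have h₁' : HasFiniteSupport fun n => latMomentum c u (n - (1, 0)) * v n := hv.mul_right _
  have h₂' : HasFiniteSupport fun n => latMomentum c u (n - (0, 1)) * v n := hv.mul_right _
  calc ∑ᶠ n, (v n * latDiff u n + latMomentum c u n * latDiff v n)
      = ∑ᶠ n, (v n * latDiff u n + (latMomentum c u n * v (n + (1, 0))
          - latMomentum c u n * v (n + (0, 1)))) := finsum_congr fun n => by unfold latDiff; ring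
    _ = ∑ᶠ n, v n * latDiff u n + (∑ᶠ n, latMomentum c u n * v (n + (1, 0))
          - ∑ᶠ n, latMomentum c u n * v (n + (0, 1))) := by
      rw [finsum_add_distrib h₀ (h₁.fun_sub h₂), finsum_sub_distrib h₁ h₂]
    _ = ∑ᶠ n, v n * latDiff u n + (∑ᶠ n, latMomentum c u (n - (1, 0)) * v n
          - ∑ᶠ n, latMomentum c u (n - (0, 1)) * v n) := by
      rw [finsum_mul_comp_add, finsum_mul_comp_add]
    _ = ∑ᶠ n, latEL c u n * v n := by
      rw [← finsum_sub_distrib h₁' h₂', ← finsum_add_distrib h₀ (h₁'.fun_sub h₂')]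
      exact finsum_congr fun n => by rw [latEL_eq_latDiff_add_latMomentum_sub]; ring

/-- First variation of the lattice KdV action: for `u` with `u_{1,0} − u_{0,1} > 0` everywhere
and `v` of finite support, there is `ε₀ > 0` such that for `|ε| < ε₀` the difference
`L[u+εv] − L[u]` has finite support, and `ε ↦ ∑_n (L[u+εv](n) − L[u](n))` is differentiable
at `ε = 0` with derivative `∑_n Ẽ_u(L)(n)·v(n)`. -/
theorem stmt_12 (c : ℝ) (u v : ℤ × ℤ → ℝ)
    (hu : ∀ n : ℤ × ℤ, 0 < u (n + (1, 0)) - u (n + (0, 1)))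
    (hv : (Function.support v).Finite) :
    ∃ ε₀ > (0 : ℝ),
      (∀ ε : ℝ, |ε| < ε₀ →
        (Function.support
          (fun n => latL c (fun m => u m + ε * v m) n - latL c u n)).Finite) ∧
      HasDerivAt
        (fun ε : ℝ => ∑ᶠ n : ℤ × ℤ, (latL c (fun m => u m + ε * v m) n - latL c u n))
        (∑ᶠ n : ℤ × ℤ, latEL c u n * v n) 0 := by
  have hT : (support v ∪ (· + (1, 0)) ⁻¹' support v ∪ (· + (0, 1)) ⁻¹' support v).Finite :=
    (hv.union (hv.preimage (add_left_injective _).injOn)).union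
      (hv.preimage (add_left_injective _).injOn)
  refine ⟨1, one_pos, fun ε _ => hT.subset (support_latL_perturb_sub_subset c u v ε), ?_⟩
  rw [← finsum_variation_eq_finsum_latEL_mul c u v hv]
  exact hasDerivAt_finsum hT (support_latL_perturb_sub_subset c u v)
    fun n => (hasDerivAt_latL_perturb c u v n (hu n).ne').sub_const _

end
end

section
/- Conservation laws of the lattice KdV equation from constrained gauge symmetries: let c ∈ ℝ and let u : ℤ² → ℝ satisfy u(n+e₁) ≠ u(n+e₂) for all n and the Euler–Lagrange equation Ẽ_u(L)(n) = 0 for all n, and let g : ℤ² → ℝ satisfy g(n+e₁) = g(n+e₂) for all n. With ν(n) = u(n) − u(n+e₁+e₂) + c/(u(n+e₁) − u(n+e₂)), the discrete conservation law D̃₁(g(n)ν(n−e₁)) + D̃₂(−g(n)ν(n−e₂)) = 0 holds for every n ∈ ℤ²; explicitly, g(n+e₁)ν(n) − g(n)ν(n−e₁) − g(n+e₂)ν(n) + g(n)ν(n−e₂) = 0. -/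
noncomputable section

/- An identity with no hypothesis on `u`: where a denominator vanishes, the same junk term
`c / 0 = 0` occurs on both sides. -/
theorem latNu_sub_latNu (c : ℝ) (u : ℤ × ℤ → ℝ) (n : ℤ × ℤ) :
    latNu c u (n - (1, 0)) - latNu c u (n - (0, 1)) = latEL c u n := by
  obtain ⟨a, b⟩ := n
  simp only [latNu, latEL, Prod.mk_add_mk, Prod.mk_sub_mk]
  ring_nf

theorem latNu_flux_divergence (c : ℝ) (u g : ℤ × ℤ → ℝ) (n : ℤ × ℤ) :
    g (n + (1, 0)) * latNu c u n - g n * latNu c u (n - (1, 0))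
      - g (n + (0, 1)) * latNu c u n + g n * latNu c u (n - (0, 1))
      = (g (n + (1, 0)) - g (n + (0, 1))) * latNu c u n - g n * latEL c u n := by
  rw [← latNu_sub_latNu]
  ring

theorem stmt_15_general (c : ℝ) (u : ℤ × ℤ → ℝ)
    (hEL : ∀ n : ℤ × ℤ, latEL c u n = 0)
    (g : ℤ × ℤ → ℝ) (hg : ∀ n : ℤ × ℤ, g (n + (1, 0)) = g (n + (0, 1)))
    (n : ℤ × ℤ) :
    g (n + (1, 0)) * latNu c u n - g n * latNu c u (n - (1, 0))
      - g (n + (0, 1)) * latNu c u n + g n * latNu c u (n - (0, 1)) = 0 := by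
  rw [latNu_flux_divergence, hg n, hEL n]
  ring

/-- Conservation laws of the lattice KdV equation from constrained gauge symmetries:
on solutions of `Ẽ_u(L) = 0`, for any `g` with `g_{1,0} = g_{0,1}`,
`D̃₁(g(n)ν(n−e₁)) + D̃₂(−g(n)ν(n−e₂)) = 0`, i.e.
`g(n+e₁)ν(n) − g(n)ν(n−e₁) − g(n+e₂)ν(n) + g(n)ν(n−e₂) = 0`. -/
theorem stmt_15 (c : ℝ) (u : ℤ × ℤ → ℝ)
    (hu : ∀ n : ℤ × ℤ, u (n + (1, 0)) ≠ u (n + (0, 1)))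
    (hEL : ∀ n : ℤ × ℤ, latEL c u n = 0)
    (g : ℤ × ℤ → ℝ) (hg : ∀ n : ℤ × ℤ, g (n + (1, 0)) = g (n + (0, 1)))
    (n : ℤ × ℤ) :
    g (n + (1, 0)) * latNu c u n - g n * latNu c u (n - (1, 0))
      - g (n + (0, 1)) * latNu c u n + g n * latNu c u (n - (0, 1)) = 0 :=
  stmt_15_general c u hEL g hg n

end
end

section
/- The discrete potential KdV equation implies the lattice KdV Euler–Lagrange equation: let c ∈ ℝ and let u : ℤ² → ℝ satisfy u(n+e₁) ≠ u(n+e₂) for all n and the discrete potential KdV equation (u(n+e₁+e₂) − u(n))·(u(n+e₁) − u(n+e₂)) = c for all n ∈ ℤ². Then for every n ∈ ℤ²: u(n+e₁) − u(n+e₂) + u(n−e₁) − u(n−e₂) − c·[ 1/(u(n+e₁−e₂) − u(n)) − 1/(u(n) − u(n−e₁+e₂)) ] = 0. -/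
/-! Solving the potential KdV equation on the squares with lower-left corners `n - e₂` and
`n - e₁` for their diagonal differences gives `u(n+e₁) - u(n-e₂) = c / (u(n+e₁-e₂) - u n)` and
`u(n+e₂) - u(n-e₁) = c / (u n - u(n-e₁+e₂))`; the Euler–Lagrange expression is their difference. -/

section

variable {G K : Type*} [AddCommGroup G] [Field K] {u : G → K} {c : K} {e₁ e₂ : G}

theorem pkdv_sub_eq_div (hu : ∀ n, u (n + e₁) ≠ u (n + e₂))
    (hpkdv : ∀ n, (u (n + (e₁ + e₂)) - u n) * (u (n + e₁) - u (n + e₂)) = c) (n : G) :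
    u (n + (e₁ + e₂)) - u n = c / (u (n + e₁) - u (n + e₂)) :=
  eq_div_of_mul_eq (sub_ne_zero.mpr (hu n)) (hpkdv n)

theorem lattice_kdv_of_pkdv (hu : ∀ n, u (n + e₁) ≠ u (n + e₂))
    (hpkdv : ∀ n, (u (n + (e₁ + e₂)) - u n) * (u (n + e₁) - u (n + e₂)) = c) (n : G) :
    u (n + e₁) - u (n + e₂) + u (n - e₁) - u (n - e₂)
      - c * (1 / (u (n + (e₁ - e₂)) - u n) - 1 / (u n - u (n + (e₂ - e₁)))) = 0 := by
  have h₁ := pkdv_sub_eq_div hu hpkdv (n - e₂)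
  have h₂ := pkdv_sub_eq_div hu hpkdv (n - e₁)
  rw [show n - e₂ + (e₁ + e₂) = n + e₁ by abel, show n - e₂ + e₁ = n + (e₁ - e₂) by abel,
    sub_add_cancel] at h₁
  rw [show n - e₁ + (e₁ + e₂) = n + e₂ by abel, show n - e₁ + e₂ = n + (e₂ - e₁) by abel,
    sub_add_cancel] at h₂
  linear_combination h₁ - h₂

end

/-- The discrete potential KdV equation `(u_{1,1} − u_{0,0})(u_{1,0} − u_{0,1}) = c`
implies the lattice KdV Euler–Lagrange equation
`u_{1,0} − u_{0,1} + u_{−1,0} − u_{0,−1} − c(1/(u_{1,−1} − u_{0,0}) − 1/(u_{0,0} − u_{−1,1})) = 0`. -/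
theorem stmt_16 (c : ℝ) (u : ℤ × ℤ → ℝ)
    (hu : ∀ n : ℤ × ℤ, u (n + (1, 0)) ≠ u (n + (0, 1)))
    (hpkdv : ∀ n : ℤ × ℤ,
      (u (n + (1, 1)) - u n) * (u (n + (1, 0)) - u (n + (0, 1))) = c)
    (n : ℤ × ℤ) :
    u (n + (1, 0)) - u (n + (0, 1)) + u (n - (1, 0)) - u (n - (0, 1))
      - c * (1 / (u (n + (1, -1)) - u n) - 1 / (u n - u (n + (-1, 1)))) = 0 := by
  simpa using lattice_kdv_of_pkdv hu (by simpa using hpkdv) n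
end

section
/- Gauge invariance of the Christiansen–Halvorsen discrete Maxwell–Klein–Gordon Lagrangian: let ψ : (Fin 4 → ℤ) → ℂ, λ : (Fin 4 → ℤ) → ℝ, A_μ : (Fin 4 → ℤ) → ℝ for each μ ∈ Fin 4, h_μ ∈ ℝ nonzero, and e, m ∈ ℝ. Define F_{μν} = D̄_μA_ν − D̄_νA_μ, (∇̃_μψ)(n) = (ψ(n+e_μ) − exp(−i·e·h_μ·A_μ(n))ψ(n))/h_μ, and L[ψ,A](n) = (1/4)∑_{μ,ν} η^{μμ}η^{νν}F_{μν}(n)² + ∑_μ η^{μμ}·(∇̃_μψ)(n)·conj((∇̃_μψ)(n)) + m²·ψ(n)·conj(ψ(n)). Then for every n: L[exp(−ieλ)ψ, A + D̄λ](n) = L[ψ, A](n), where the gauge transformation replaces ψ(n) by exp(−i·e·λ(n))ψ(n) and A_μ by A_μ + D̄_μλ. -/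
noncomputable section

/-- Diagonal entries of the flat space-time metric `η = diag(−1,1,1,1)`. -/
def eta : Fin 4 → ℝ := fun μ => if μ = 0 then -1 else 1

/-- Scaled forward difference `D̄_μ f = (f(n+e_μ) − f(n))/h_μ` on real lattice functions. -/
def dbarR (h : Fin 4 → ℝ) (μ : Fin 4) (f : (Fin 4 → ℤ) → ℝ) (n : Fin 4 → ℤ) : ℝ :=
  (f (n + Pi.single μ 1) - f n) / h μ

/-- The Christiansen–Halvorsen covariant difference operator
`(∇̃_μ[A]ψ)(n) = (ψ(n+e_μ) − exp(−ieh_μA_μ(n))ψ(n))/h_μ`. -/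
def cdiff (e : ℝ) (h : Fin 4 → ℝ) (A : Fin 4 → (Fin 4 → ℤ) → ℝ) (μ : Fin 4)
    (ψ : (Fin 4 → ℤ) → ℂ) (n : Fin 4 → ℤ) : ℂ :=
  (ψ (n + Pi.single μ 1) - Complex.exp (-(Complex.I * e * h μ * A μ n)) * ψ n) / (h μ : ℂ)

/-- Discrete field strength `F_{μν} = D̄_μA_ν − D̄_νA_μ`. -/
def dFst (h : Fin 4 → ℝ) (A : Fin 4 → (Fin 4 → ℤ) → ℝ) (μ ν : Fin 4)
    (n : Fin 4 → ℤ) : ℝ :=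
  dbarR h μ (A ν) n - dbarR h ν (A μ) n

/-- The Christiansen–Halvorsen discrete Maxwell–Klein–Gordon Lagrangian
`L = (1/4)∑ F_{μν}F^{μν} + ∑ η^{μμ}(∇̃_μψ)conj(∇̃_μψ) + m²ψ·conj(ψ)`. -/
def dmkgL (e m : ℝ) (h : Fin 4 → ℝ) (ψ : (Fin 4 → ℤ) → ℂ)
    (A : Fin 4 → (Fin 4 → ℤ) → ℝ) (n : Fin 4 → ℤ) : ℂ :=
  (((1 / 4 : ℝ) * ∑ μ, ∑ ν, eta μ * eta ν * dFst h A μ ν n * dFst h A μ ν n : ℝ) : ℂ)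
    + ∑ μ, (eta μ : ℂ) * cdiff e h A μ ψ n * (starRingEnd ℂ) (cdiff e h A μ ψ n)
    + (m ^ 2 : ℝ) * ψ n * (starRingEnd ℂ) (ψ n)

/-!
Forward differences in different directions commute, so `F_{μν}` is unchanged. The link phase
`exp(−ieh_μA_μ(n))` picks up exactly `exp(−ie(λ(n+e_μ) − λ(n)))`, hence `∇̃_μψ(n)` is multiplied by
the unimodular factor `exp(−ieλ(n+e_μ))`, which drops out of `∇̃_μψ · conj(∇̃_μψ)` just as
`exp(−ieλ(n))` drops out of `ψ · conj ψ`.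
-/

open ComplexConjugate

lemma dbarR_add (h : Fin 4 → ℝ) (μ : Fin 4) (f g : (Fin 4 → ℤ) → ℝ) (n : Fin 4 → ℤ) :
    dbarR h μ (fun k => f k + g k) n = dbarR h μ f n + dbarR h μ g n := by
  unfold dbarR
  ring

lemma dbarR_comm (h : Fin 4 → ℝ) (μ ν : Fin 4) (f : (Fin 4 → ℤ) → ℝ) (n : Fin 4 → ℤ) :
    dbarR h μ (dbarR h ν f) n = dbarR h ν (dbarR h μ f) n := by
  unfold dbarR
  rw [add_right_comm n (Pi.single μ 1)]
  ring

lemma dFst_gauge (h : Fin 4 → ℝ) (A : Fin 4 → (Fin 4 → ℤ) → ℝ) (lam : (Fin 4 → ℤ) → ℝ)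
    (μ ν : Fin 4) (n : Fin 4 → ℤ) :
    dFst h (fun μ k => A μ k + dbarR h μ lam k) μ ν n = dFst h A μ ν n := by
  unfold dFst
  rw [dbarR_add, dbarR_add, dbarR_comm h μ ν]
  ring

lemma cdiff_gauge (e : ℝ) (h : Fin 4 → ℝ) (A : Fin 4 → (Fin 4 → ℤ) → ℝ)
    (lam : (Fin 4 → ℤ) → ℝ) (ψ : (Fin 4 → ℤ) → ℂ) (μ : Fin 4) (hμ : h μ ≠ 0)
    (n : Fin 4 → ℤ) :
    cdiff e h (fun μ k => A μ k + dbarR h μ lam k) μ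
        (fun k => Complex.exp (-(Complex.I * e * lam k)) * ψ k) n
      = Complex.exp (-(Complex.I * e * lam (n + Pi.single μ 1))) * cdiff e h A μ ψ n := by
  have hμ' : (h μ : ℂ) ≠ 0 := Complex.ofReal_ne_zero.mpr hμ
  have phase : Complex.exp (-(Complex.I * e * h μ * ((A μ n + dbarR h μ lam n : ℝ) : ℂ)))
        * Complex.exp (-(Complex.I * e * lam n))
      = Complex.exp (-(Complex.I * e * lam (n + Pi.single μ 1)))
        * Complex.exp (-(Complex.I * e * h μ * A μ n)) := by
    rw [← Complex.exp_add, ← Complex.exp_add, dbarR]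
    congr 1
    push_cast
    field_simp
    ring
  unfold cdiff
  dsimp only
  rw [← mul_assoc, phase]
  ring

lemma mul_mul_mul_conj_of_norm_eq_one {u : ℂ} (hu : ‖u‖ = 1) (a z : ℂ) :
    a * (u * z) * conj (u * z) = a * z * conj z := by
  rw [mul_assoc a, mul_assoc a, map_mul, mul_mul_mul_comm, Complex.mul_conj' u, hu]
  simp

lemma norm_exp_neg_I_mul (a b : ℝ) : ‖Complex.exp (-(Complex.I * a * b))‖ = 1 := by
  simpa [mul_assoc] using Complex.norm_exp_I_mul_ofReal (-(a * b))

/-- Gauge invariance of the Christiansen–Halvorsen discrete Maxwell–Klein–Gordon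
Lagrangian: `L[exp(−ieλ)ψ, A + D̄λ](n) = L[ψ, A](n)`. -/
theorem stmt_18 (ψ : (Fin 4 → ℤ) → ℂ) (lam : (Fin 4 → ℤ) → ℝ)
    (A : Fin 4 → (Fin 4 → ℤ) → ℝ) (h : Fin 4 → ℝ) (hh : ∀ μ, h μ ≠ 0) (e m : ℝ)
    (n : Fin 4 → ℤ) :
    dmkgL e m h (fun k => Complex.exp (-(Complex.I * e * lam k)) * ψ k)
        (fun μ k => A μ k + dbarR h μ lam k) n
      = dmkgL e m h ψ A n := by
  simp only [dmkgL, dFst_gauge, cdiff_gauge e h A lam ψ _ (hh _),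
    mul_mul_mul_conj_of_norm_eq_one (norm_exp_neg_I_mul _ _)]

end
end

section
/- Discrete Noether's Second Theorem relation for the Christiansen–Halvorsen scheme: let ψ : (Fin 4 → ℤ) → ℂ, A_μ : (Fin 4 → ℤ) → ℝ for each μ ∈ Fin 4, h_μ ∈ ℝ nonzero, and e, m ∈ ℝ. With F_{μν} = D̄_μA_ν − D̄_νA_μ, F^{σβ} = η^{σσ}η^{ββ}F_{σβ}, (∇̃_μψ)(n) = (ψ(n+e_μ) − exp(−i·e·h_μ·A_μ(n))ψ(n))/h_μ, D̄_μ†f(n) = −(f(n) − f(n−e_μ))/h_μ, ∇̃_μ†f(n) = D̄_μ†f(n) + ((1 − exp(−i·e·h_μ·A_μ(n)))/h_μ)·f(n), and ∇̃_μ‡f(n) = D̄_μ†f(n) + ((1 − exp(i·e·h_μ·A_μ(n)))/h_μ)·f(n), define the discrete Euler–Lagrange expressions E_ψ(n) = ∑_μ η^{μμ}·∇̃_μ†( conj(∇̃_μψ) )(n) + m²·conj(ψ(n)), E_{ψ*}(n) = ∑_μ η^{μμ}·∇̃_μ‡( ∇̃_μψ )(n) + m²·ψ(n), and for each σ, E_σ(n)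 = i·e·exp(−i·e·h_σ·A_σ(n))·ψ(n)·conj((∇̃_σψ)(n)) − i·e·exp(i·e·h_σ·A_σ(n))·conj(ψ(n))·(∇̃_σψ)(n) − η_{σσ}∑_β D̄_β†(F^{σβ})(n). Then the difference relation −i·e·ψ(n)·E_ψ(n) + i·e·conj(ψ(n))·E_{ψ*}(n) + ∑_σ η^{σσ}·D̄_σ†(E_σ)(n) = 0 holds for every n, identically in ψ and A (not merely on solutions). -/
noncomputable section

/-- Adjoint scaled difference `D̄_μ†f(n) = −(f(n) − f(n−e_μ))/h_μ` on complex lattice functions. -/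
def dadjC (h : Fin 4 → ℝ) (μ : Fin 4) (f : (Fin 4 → ℤ) → ℂ) (n : Fin 4 → ℤ) : ℂ :=
  -((f n - f (n - Pi.single μ 1)) / (h μ : ℂ))

/-- Adjoint scaled difference `D̄_μ†f(n) = −(f(n) − f(n−e_μ))/h_μ` on real lattice functions. -/
def dadjR (h : Fin 4 → ℝ) (μ : Fin 4) (f : (Fin 4 → ℤ) → ℝ) (n : Fin 4 → ℤ) : ℝ :=
  -((f n - f (n - Pi.single μ 1)) / h μ)

/-- The adjoint covariant difference operator
`∇̃_μ†f(n) = D̄_μ†f(n) + ((1 − exp(−ieh_μA_μ(n)))/h_μ)·f(n)`. -/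
def cadj (e : ℝ) (h : Fin 4 → ℝ) (A : Fin 4 → (Fin 4 → ℤ) → ℝ) (μ : Fin 4)
    (f : (Fin 4 → ℤ) → ℂ) (n : Fin 4 → ℤ) : ℂ :=
  dadjC h μ f n + ((1 - Complex.exp (-(Complex.I * e * h μ * A μ n))) / (h μ : ℂ)) * f n

/-- The conjugate adjoint covariant difference operator
`∇̃_μ‡f(n) = D̄_μ†f(n) + ((1 − exp(ieh_μA_μ(n)))/h_μ)·f(n)`. -/
def cadj' (e : ℝ) (h : Fin 4 → ℝ) (A : Fin 4 → (Fin 4 → ℤ) → ℝ) (μ : Fin 4)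
    (f : (Fin 4 → ℤ) → ℂ) (n : Fin 4 → ℤ) : ℂ :=
  dadjC h μ f n + ((1 - Complex.exp (Complex.I * e * h μ * A μ n)) / (h μ : ℂ)) * f n

/-- Raised-index discrete field strength `F^{σβ} = η^{σσ}η^{ββ}F_{σβ}`. -/
def dFup (h : Fin 4 → ℝ) (A : Fin 4 → (Fin 4 → ℤ) → ℝ) (σ β : Fin 4)
    (n : Fin 4 → ℤ) : ℝ :=
  eta σ * eta β * dFst h A σ β n

/-- Discrete Euler–Lagrange expression `E_ψ = ∑_μ η^{μμ}∇̃_μ†(conj(∇̃_μψ)) + m²·conj(ψ)`. -/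
def dEpsi (e m : ℝ) (h : Fin 4 → ℝ) (ψ : (Fin 4 → ℤ) → ℂ)
    (A : Fin 4 → (Fin 4 → ℤ) → ℝ) (n : Fin 4 → ℤ) : ℂ :=
  (∑ μ, (eta μ : ℂ) * cadj e h A μ (fun m' => (starRingEnd ℂ) (cdiff e h A μ ψ m')) n)
    + (m ^ 2 : ℝ) * (starRingEnd ℂ) (ψ n)

/-- Discrete Euler–Lagrange expression `E_{ψ*} = ∑_μ η^{μμ}∇̃_μ‡(∇̃_μψ) + m²ψ`. -/
def dEpsiStar (e m : ℝ) (h : Fin 4 → ℝ) (ψ : (Fin 4 → ℤ) → ℂ)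
    (A : Fin 4 → (Fin 4 → ℤ) → ℝ) (n : Fin 4 → ℤ) : ℂ :=
  (∑ μ, (eta μ : ℂ) * cadj' e h A μ (fun m' => cdiff e h A μ ψ m') n)
    + (m ^ 2 : ℝ) * ψ n

/-- Discrete Euler–Lagrange expression
`E_σ = ie·exp(−ieh_σA_σ)ψ·conj(∇̃_σψ) − ie·exp(ieh_σA_σ)·conj(ψ)·∇̃_σψ − η_{σσ}∑_β D̄_β†(F^{σβ})`. -/
def dEsig (e : ℝ) (h : Fin 4 → ℝ) (ψ : (Fin 4 → ℤ) → ℂ)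
    (A : Fin 4 → (Fin 4 → ℤ) → ℝ) (σ : Fin 4) (n : Fin 4 → ℤ) : ℂ :=
  Complex.I * e * Complex.exp (-(Complex.I * e * h σ * A σ n)) * ψ n
      * (starRingEnd ℂ) (cdiff e h A σ ψ n)
    - Complex.I * e * Complex.exp (Complex.I * e * h σ * A σ n)
      * (starRingEnd ℂ) (ψ n) * cdiff e h A σ ψ n
    - ((eta σ * ∑ β, dadjR h β (dFup h A σ β) n : ℝ) : ℂ)

/-! The proof is a direct computation. In each direction `μ` the matter terms combine with
`D̄_μ†` of the Noether current `J_μ = ie·exp(−ieh_μA_μ)ψ·conj(∇̃_μψ) − c.c.`: the value of `J_μ` at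
`n` cancels against the diagonal parts of `∇̃_μ†` and `∇̃_μ‡`, and its value at `n − e_μ` cancels
the off-diagonal parts because `h_μ·(∇̃_μψ)(n − e_μ) = ψ(n) − exp(−ieh_μA_μ(n − e_μ))ψ(n − e_μ)`.
What remains is `∑_σ ∑_β D̄_σ†D̄_β†F^{σβ}`, which vanishes since the difference operators commute
and `F` is antisymmetric. -/

lemma eta_mul_self (μ : Fin 4) : eta μ * eta μ = 1 := by
  unfold eta; split_ifs <;> norm_num

lemma dadjR_neg (h : Fin 4 → ℝ) (μ : Fin 4) (f : (Fin 4 → ℤ) → ℝ) :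
    dadjR h μ (-f) = -dadjR h μ f := by
  ext n; simp only [dadjR, Pi.neg_apply]; ring

lemma dadjR_const_mul (h : Fin 4 → ℝ) (μ : Fin 4) (c : ℝ) (f : (Fin 4 → ℤ) → ℝ)
    (n : Fin 4 → ℤ) : dadjR h μ (fun k => c * f k) n = c * dadjR h μ f n := by
  simp only [dadjR]; ring

lemma dadjR_sum {ι : Type*} (s : Finset ι) (h : Fin 4 → ℝ) (μ : Fin 4)
    (f : ι → (Fin 4 → ℤ) → ℝ) (n : Fin 4 → ℤ) :
    dadjR h μ (fun k => ∑ i ∈ s, f i k) n = ∑ i ∈ s, dadjR h μ (f i) n := by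
  simp only [dadjR, ← Finset.sum_sub_distrib, Finset.sum_div, Finset.sum_neg_distrib]

lemma dadjR_comm (h : Fin 4 → ℝ) (σ β : Fin 4) (f : (Fin 4 → ℤ) → ℝ) (n : Fin 4 → ℤ) :
    dadjR h σ (dadjR h β f) n = dadjR h β (dadjR h σ f) n := by
  simp only [dadjR, sub_right_comm n]; ring

lemma dadjC_sub (h : Fin 4 → ℝ) (μ : Fin 4) (f g : (Fin 4 → ℤ) → ℂ) (n : Fin 4 → ℤ) :
    dadjC h μ (fun k => f k - g k) n = dadjC h μ f n - dadjC h μ g n := by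
  simp only [dadjC]; ring

lemma dadjC_ofReal (h : Fin 4 → ℝ) (μ : Fin 4) (f : (Fin 4 → ℤ) → ℝ) (n : Fin 4 → ℤ) :
    dadjC h μ (fun k => (f k : ℂ)) n = dadjR h μ f n := by
  simp only [dadjC, dadjR]; push_cast; ring

lemma dFup_antisymm (h : Fin 4 → ℝ) (A : Fin 4 → (Fin 4 → ℤ) → ℝ) (σ β : Fin 4) :
    dFup h A β σ = -dFup h A σ β := by
  ext n; simp only [dFup, dFst, Pi.neg_apply]; ring

lemma sum_dadjR_dadjR_of_antisymm (h : Fin 4 → ℝ) (G : Fin 4 → Fin 4 → (Fin 4 → ℤ) → ℝ)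
    (hG : ∀ σ β, G β σ = -G σ β) (n : Fin 4 → ℤ) :
    ∑ σ, dadjR h σ (fun k => ∑ β, dadjR h β (G σ β) k) n = 0 := by
  have hswap : ∑ σ, ∑ β, dadjR h σ (dadjR h β (G σ β)) n
      = -∑ σ, ∑ β, dadjR h σ (dadjR h β (G σ β)) n := by
    calc ∑ σ, ∑ β, dadjR h σ (dadjR h β (G σ β)) n
        = ∑ β, ∑ σ, dadjR h β (dadjR h σ (G σ β)) n := by
          rw [Finset.sum_comm]; simp only [dadjR_comm h _ _ (G _ _)]
      _ = ∑ σ, ∑ β, dadjR h σ (dadjR h β (-G σ β)) n := by simp only [← hG]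
      _ = -∑ σ, ∑ β, dadjR h σ (dadjR h β (G σ β)) n := by
          simp only [dadjR_neg, Pi.neg_apply, Finset.sum_neg_distrib]
  simp only [dadjR_sum]
  linarith

lemma conj_exp_neg_I_mul (a b c : ℝ) :
    (starRingEnd ℂ) (Complex.exp (-(Complex.I * a * b * c)))
      = Complex.exp (Complex.I * a * b * c) := by
  rw [← Complex.exp_conj]; simp

/-- The Noether current of the global `U(1)` symmetry in direction `μ`; `E_σ` is
`current σ − η_{σσ}∑_β D̄_β†(F^{σβ})`. -/
def current (e : ℝ) (h : Fin 4 → ℝ) (ψ : (Fin 4 → ℤ) → ℂ) (A : Fin 4 → (Fin 4 → ℤ) → ℝ)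
    (μ : Fin 4) (n : Fin 4 → ℤ) : ℂ :=
  Complex.I * e * Complex.exp (-(Complex.I * e * h μ * A μ n)) * ψ n
      * (starRingEnd ℂ) (cdiff e h A μ ψ n)
    - Complex.I * e * Complex.exp (Complex.I * e * h μ * A μ n)
      * (starRingEnd ℂ) (ψ n) * cdiff e h A μ ψ n

lemma cdiff_sub_single (e : ℝ) (h : Fin 4 → ℝ) (A : Fin 4 → (Fin 4 → ℤ) → ℝ) (μ : Fin 4)
    (ψ : (Fin 4 → ℤ) → ℂ) (n : Fin 4 → ℤ) :
    cdiff e h A μ ψ (n - Pi.single μ 1)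
      = (ψ n - Complex.exp (-(Complex.I * e * h μ * A μ (n - Pi.single μ 1)))
          * ψ (n - Pi.single μ 1)) / (h μ : ℂ) := by
  rw [cdiff, sub_add_cancel]

lemma matter_add_dadjC_current (ψ : (Fin 4 → ℤ) → ℂ) (A : Fin 4 → (Fin 4 → ℤ) → ℝ)
    (h : Fin 4 → ℝ) (e : ℝ) (μ : Fin 4) (n : Fin 4 → ℤ) :
    -(Complex.I * e * ψ n * cadj e h A μ (fun k => (starRingEnd ℂ) (cdiff e h A μ ψ k)) n)
      + Complex.I * e * (starRingEnd ℂ) (ψ n) * cadj' e h A μ (cdiff e h A μ ψ) n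
      + dadjC h μ (current e h ψ A μ) n = 0 := by
  simp only [cadj, cadj', dadjC, current, cdiff_sub_single, map_div₀, map_sub, map_mul,
    Complex.conj_ofReal, conj_exp_neg_I_mul]
  ring

lemma eta_mul_dadjC_dEsig (e : ℝ) (h : Fin 4 → ℝ) (ψ : (Fin 4 → ℤ) → ℂ)
    (A : Fin 4 → (Fin 4 → ℤ) → ℝ) (σ : Fin 4) (n : Fin 4 → ℤ) :
    (eta σ : ℂ) * dadjC h σ (dEsig e h ψ A σ) n
      = eta σ * dadjC h σ (current e h ψ A σ) n
        - (dadjR h σ (fun k => ∑ β, dadjR h β (dFup h A σ β) k) n : ℝ) := by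
  have hE : dEsig e h ψ A σ
      = fun k => current e h ψ A σ k - ((eta σ * ∑ β, dadjR h β (dFup h A σ β) k : ℝ) : ℂ) :=
    rfl
  rw [hE, dadjC_sub, dadjC_ofReal, dadjR_const_mul, Complex.ofReal_mul, mul_sub, ← mul_assoc,
    ← Complex.ofReal_mul, eta_mul_self, Complex.ofReal_one, one_mul]

theorem stmt_19_general (ψ : (Fin 4 → ℤ) → ℂ) (A : Fin 4 → (Fin 4 → ℤ) → ℝ)
    (h : Fin 4 → ℝ) (e m : ℝ) (n : Fin 4 → ℤ) :
    -(Complex.I * e * ψ n * dEpsi e m h ψ A n)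
      + Complex.I * e * (starRingEnd ℂ) (ψ n) * dEpsiStar e m h ψ A n
      + ∑ σ, (eta σ : ℂ) * dadjC h σ (dEsig e h ψ A σ) n = 0 := by
  have matter := matter_add_dadjC_current ψ A h e
  have gauge : ((∑ σ, dadjR h σ (fun k => ∑ β, dadjR h β (dFup h A σ β) k) n : ℝ) : ℂ) = 0 := by
    rw [sum_dadjR_dadjR_of_antisymm h _ (dFup_antisymm h A), Complex.ofReal_zero]
  simp only [dEpsi, dEpsiStar, eta_mul_dadjC_dEsig, Fin.sum_univ_four] at gauge ⊢
  push_cast at gauge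
  linear_combination (eta 0 : ℂ) * matter 0 n + (eta 1 : ℂ) * matter 1 n
    + (eta 2 : ℂ) * matter 2 n + (eta 3 : ℂ) * matter 3 n - gauge

/-- Discrete Noether's Second Theorem relation for the Christiansen–Halvorsen scheme:
`−ieψ·E_ψ + ie·conj(ψ)·E_{ψ*} + ∑_σ η^{σσ}D̄_σ†(E_σ) = 0` identically in `ψ` and `A`. -/
theorem stmt_19 (ψ : (Fin 4 → ℤ) → ℂ) (A : Fin 4 → (Fin 4 → ℤ) → ℝ)
    (h : Fin 4 → ℝ) (hh : ∀ μ, h μ ≠ 0) (e m : ℝ) (n : Fin 4 → ℤ) :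
    -(Complex.I * e * ψ n * dEpsi e m h ψ A n)
      + Complex.I * e * (starRingEnd ℂ) (ψ n) * dEpsiStar e m h ψ A n
      + ∑ σ, (eta σ : ℂ) * dadjC h σ (dEsig e h ψ A σ) n = 0 :=
  stmt_19_general ψ A h e m n

end
end
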